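/- arXiv:1012.0412 — 2 statements merged into one kernel-verified Lean document; each statement's English description precedes it below -/
import Mathlib

section
/- For p in (0,1/2) ∪ (1/2,1), H[B(2,p)] − H[B(1,p)] − (1/2)·log 2 ≤ 2(p − 1/2)²·(log 2 − 1) < 0. -/
open Real

noncomputable def binEnt (p : ℝ) : ℝ := -(p * Real.log p) - (1 - p) * Real.log (1 - p)

noncomputable def binomPmf (n : ℕ) (p : ℝ) (k : ℕ) : ℝ :=
  (n.choose k : ℝ) * p ^ k * (1 - p) ^ (n - k)

noncomputable def binomEnt (n : ℕ) (p : ℝ) : ℝ :=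
  -∑ k ∈ Finset.range (n + 1), binomPmf n p k * Real.log (binomPmf n p k)

/-!
Expanding the sums, `H[B(2,p)] = 2 h(p) - 2p(1-p) log 2` and `H[B(1,p)] = h(p)` for the binary
entropy `h`, and `2p(1-p) = 1/2 - 2(p - 1/2)²`, so the claim reduces to
`h(p) ≤ log 2 - 2(p - 1/2)²`. This holds because `h(p) + 2(p - 1/2)²` is concave
(`h'' = -1/(p(1-p)) ≤ -4`) and symmetric under `p ↦ 1 - p`, hence maximal at `p = 1/2`,
where it equals `log 2`.
-/

open Set

lemma binEnt_eq_binEntropy (p : ℝ) : binEnt p = binEntropy p := by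
  simp only [binEnt, binEntropy, log_inv]
  ring

lemma binomEnt_one (p : ℝ) : binomEnt 1 p = binEnt p := by
  simp [binomEnt, binomPmf, binEnt, Finset.sum_range_succ, sub_eq_add_neg, add_comm]

lemma binomEnt_two (p : ℝ) : binomEnt 2 p = 2 * binEnt p - 2 * p * (1 - p) * log 2 := by
  rcases eq_or_ne p 0 with rfl | hp0
  · simp [binomEnt, binomPmf, Finset.sum_range_succ, binEnt]
  rcases eq_or_ne p 1 with rfl | hp1
  · simp [binomEnt, binomPmf, Finset.sum_range_succ, binEnt]
  have hq0 : 1 - p ≠ 0 := sub_ne_zero.mpr hp1.symm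
  have hsum : binomEnt 2 p = -((1 - p) ^ 2 * log ((1 - p) ^ 2)
      + 2 * p * (1 - p) * log (2 * p * (1 - p)) + p ^ 2 * log (p ^ 2)) := by
    simp [binomEnt, binomPmf, Finset.sum_range_succ, mul_assoc]
  rw [hsum, log_pow, log_pow, log_mul (by positivity) hq0, log_mul two_ne_zero hp0, binEnt]
  ring

lemma concaveOn_binEntropy_add_sq :
    ConcaveOn ℝ (Icc 0 1) fun p ↦ binEntropy p + 2 * (p - 1 / 2) ^ 2 := by
  refine concaveOn_of_hasDerivWithinAt2_nonpos (convex_Icc 0 1) (by fun_prop)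
    (f' := fun p ↦ log (1 - p) - log p + 4 * (p - 1 / 2))
    (f'' := fun p ↦ -1 / (p * (1 - p)) + 4) ?_ ?_ ?_ <;> rw [interior_Icc] <;>
    rintro p ⟨hp0, hp1⟩ <;> have hq0 : 0 < 1 - p := sub_pos.mpr hp1
  · have hquad : HasDerivAt (fun x : ℝ ↦ 2 * (x - 1 / 2) ^ 2) (4 * (p - 1 / 2)) p :=
      ((((hasDerivAt_id' p).sub_const (1 / 2)).pow 2).const_mul 2).congr_deriv (by ring)
    exact ((hasDerivAt_binEntropy hp0.ne' hp1.ne).add hquad).hasDerivWithinAt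
  · have hlog₁ := ((hasDerivAt_id' p).const_sub 1).log hq0.ne'
    have hlin := ((hasDerivAt_id' p).sub_const (1 / 2)).const_mul 4
    refine (((hlog₁.sub (hasDerivAt_log hp0.ne')).add hlin).congr_deriv ?_).hasDerivWithinAt
    field_simp
    ring
  · rw [div_add' _ _ _ (by positivity), div_nonpos_iff]
    exact .inr ⟨by nlinarith [sq_nonneg (2 * p - 1)], by positivity⟩

lemma binEntropy_le_log_two_sub_sq {p : ℝ} (hp : p ∈ Icc 0 1) :
    binEntropy p ≤ log 2 - 2 * (p - 1 / 2) ^ 2 := by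
  have hq : 1 - p ∈ Icc (0 : ℝ) 1 := ⟨sub_nonneg.mpr hp.2, sub_le_self _ hp.1⟩
  have hmid := concaveOn_binEntropy_add_sq.2 hp hq (by norm_num : (0 : ℝ) ≤ 1 / 2)
    (by norm_num : (0 : ℝ) ≤ 1 / 2) (by norm_num)
  simp only [smul_eq_mul] at hmid
  rw [show 1 / 2 * p + 1 / 2 * (1 - p) = (2 : ℝ)⁻¹ by ring,
    binEntropy_one_sub, binEntropy_two_inv] at hmid
  linarith

theorem binomEnt_diff_neg (p : ℝ) (hp : p ∈ Set.Ioo (0:ℝ) 1) (hne : p ≠ 1/2) :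
    binomEnt 2 p - binomEnt 1 p - (1/2) * Real.log 2 ≤ 2 * (p - 1/2)^2 * (Real.log 2 - 1)
    ∧ 2 * (p - 1/2)^2 * (Real.log 2 - 1) < 0 := by
  have hbound := binEntropy_le_log_two_sub_sq (Ioo_subset_Icc_self hp)
  rw [← binEnt_eq_binEntropy] at hbound
  refine ⟨?_, mul_neg_of_pos_of_neg ?_ ?_⟩
  · rw [binomEnt_two, binomEnt_one]
    linear_combination hbound
  · have : p - 1 / 2 ≠ 0 := sub_ne_zero.mpr hne
    positivity
  · linarith [log_two_lt_d9]
end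

section
/- For p ∈ (0,1), n ≥ 1, and any nonnegative integer l, H[B(n+1,p)] − H[B(n,p)] ≥ ∑_{k=1}^{2l+1} F^{(k)}(p) (n+1)^{−k} μ_k^{(n+1)}, where μ_k^{(n+1)} = ∑_{i=0}^{n+1} (i − (n+1)p)^k P_{B(n+1,p)}(i) is the k-th central moment of B(n+1,p), F^{(1)}(p)=log(p/(1−p)) and F^{(k)}(p)=[ (1−p)^{−(k−1)} + (−1)^k p^{−(k−1)} ]/(k(k−1)) for k ≥ 2. -/
open Real

noncomputable def Fcoef (k : ℕ) (p : ℝ) : ℝ :=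
  if k = 1 then Real.log (p / (1 - p))
  else ((1 - p) ^ (-((k : ℤ) - 1)) + (-1 : ℝ) ^ k * p ^ (-((k : ℤ) - 1))) /
        ((k : ℝ) * ((k : ℝ) - 1))

noncomputable def centralMoment (k n : ℕ) (p : ℝ) : ℝ :=
  ∑ i ∈ Finset.range (n + 1), ((i : ℝ) - n * p) ^ k * binomPmf n p i

/-!
Write `h` for the binary entropy and `b n i` for the `Binomial(n, p)` weights. Pascal's rule
splits `b (n+1) i` into `(i/(n+1)) · b (n+1) i = p · b n (i-1)` and
`(1 - i/(n+1)) · b (n+1) i = (1-p) · b n i`, so the grouping property of entropy gives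
`H[B(n+1,p)] - H[B(n,p)] = h p - E[h (X/(n+1))]` for `X ~ B(n+1,p)`.
Since `h^(2l+2) < 0` on `(0,1)`, Taylor's theorem with Lagrange remainder puts `h` below its
Taylor polynomial of degree `2l+1` at `p`, whose coefficients are `-F^(k)(p)`; this extends to
`[0,1]` by continuity. Taking expectations turns `(X/(n+1) - p)^k` into the central moments.
-/

open scoped Nat

theorem sum_binomPmf (n : ℕ) (p : ℝ) : ∑ i ∈ Finset.range (n + 1), binomPmf n p i = 1 := by
  have h := (add_pow p (1 - p) n).symm
  rw [add_sub_cancel, one_pow] at h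
  rw [← h]
  exact Finset.sum_congr rfl fun i _ => by unfold binomPmf; ring

theorem binomPmf_nonneg {p : ℝ} (hp : p ∈ Set.Icc (0 : ℝ) 1) (n i : ℕ) : 0 ≤ binomPmf n p i := by
  have := hp.1
  have := sub_nonneg.mpr hp.2
  unfold binomPmf
  positivity

theorem binomPmf_of_lt {n i : ℕ} (h : n < i) (p : ℝ) : binomPmf n p i = 0 := by
  simp [binomPmf, Nat.choose_eq_zero_of_lt h]

theorem div_mul_binomPmf_succ_succ (n i : ℕ) (p : ℝ) :
    ((i : ℝ) + 1) / (n + 1) * binomPmf (n + 1) p (i + 1) = p * binomPmf n p i := by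
  have hC : ((n : ℝ) + 1) * n.choose i = (n + 1).choose (i + 1) * ((i : ℝ) + 1) := by
    exact_mod_cast Nat.add_one_mul_choose_eq n i
  unfold binomPmf
  rw [Nat.add_sub_add_right, div_mul_eq_mul_div, div_eq_iff (by positivity)]
  linear_combination (-(p ^ (i + 1) * (1 - p) ^ (n - i))) * hC

theorem one_sub_div_mul_binomPmf_succ (n i : ℕ) (p : ℝ) :
    (1 - (i : ℝ) / (n + 1)) * binomPmf (n + 1) p i = (1 - p) * binomPmf n p i := by
  have hn : (n : ℝ) + 1 ≠ 0 := by positivity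
  rcases lt_trichotomy i (n + 1) with h | rfl | h
  · have hC : (n.choose i : ℝ) * (n + 1) = (n + 1).choose i * ((n : ℝ) + 1 - i) := by
      have := congrArg (Nat.cast (R := ℝ)) (Nat.choose_mul_succ_eq n i)
      push_cast [Nat.cast_sub h.le] at this
      exact this
    unfold binomPmf
    rw [show n + 1 - i = n - i + 1 by omega, pow_succ, one_sub_div hn, div_mul_eq_mul_div,
      div_eq_iff hn]
    linear_combination (-(p ^ i * (1 - p) ^ (n - i) * (1 - p))) * hC
  · push_cast
    rw [div_self hn, sub_self, zero_mul, binomPmf_of_lt (Nat.lt_succ_self n), mul_zero]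
  · simp [binomPmf_of_lt h, binomPmf_of_lt (by omega : n < i)]

theorem binomEnt_eq_sum_negMulLog (n : ℕ) (p : ℝ) :
    binomEnt n p = ∑ i ∈ Finset.range (n + 1), negMulLog (binomPmf n p i) := by
  simp [binomEnt, negMulLog, Finset.sum_neg_distrib]

theorem mul_binEntropy (x b : ℝ) :
    b * binEntropy x = negMulLog (x * b) + negMulLog ((1 - x) * b) - negMulLog b := by
  rw [binEntropy_eq_negMulLog_add_negMulLog_one_sub, negMulLog_mul, negMulLog_mul]
  ring

theorem binomEnt_succ_sub (n : ℕ) (p : ℝ) :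
    binomEnt (n + 1) p - binomEnt n p = binEntropy p -
      ∑ i ∈ Finset.range (n + 2), binomPmf (n + 1) p i * binEntropy (i / (n + 1)) := by
  have hsucc : ∑ i ∈ Finset.range (n + 2), negMulLog ((i : ℝ) / (n + 1) * binomPmf (n + 1) p i)
      = ∑ j ∈ Finset.range (n + 1), negMulLog (p * binomPmf n p j) := by
    rw [Finset.sum_range_succ']
    simp [div_mul_binomPmf_succ_succ]
  have hself :
      ∑ i ∈ Finset.range (n + 2), negMulLog ((1 - (i : ℝ) / (n + 1)) * binomPmf (n + 1) p i)
        = ∑ j ∈ Finset.range (n + 1), negMulLog ((1 - p) * binomPmf n p j) := by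
    simp_rw [one_sub_div_mul_binomPmf_succ]
    rw [Finset.sum_range_succ, binomPmf_of_lt (Nat.lt_succ_self n)]
    simp
  simp_rw [mul_binEntropy, Finset.sum_sub_distrib, Finset.sum_add_distrib, hsucc, hself,
    negMulLog_mul, Finset.sum_add_distrib, ← Finset.sum_mul, ← Finset.mul_sum, sum_binomPmf,
    binomEnt_eq_sum_negMulLog, binEntropy_eq_negMulLog_add_negMulLog_one_sub]
  ring

theorem sum_binomPmf_mul_div_sub_pow (n k : ℕ) (p : ℝ) :
    ∑ i ∈ Finset.range (n + 2), binomPmf (n + 1) p i * ((i : ℝ) / (n + 1) - p) ^ k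
      = centralMoment k (n + 1) p / ((n : ℝ) + 1) ^ k := by
  unfold centralMoment
  rw [Finset.sum_div]
  refine Finset.sum_congr rfl fun i _ => ?_
  rw [show (i : ℝ) / (n + 1) - p = (i - (n + 1) * p) / (n + 1) by field_simp, div_pow]
  push_cast
  ring

noncomputable def binEntropyDeriv : ℕ → ℝ → ℝ
  | 0 => binEntropy
  | 1 => fun x => log (1 - x) - log x
  | j + 2 => fun x => -(j ! * ((-1) ^ j * x ^ (-(j + 1 : ℤ)) + (1 - x) ^ (-(j + 1 : ℤ))))

theorem hasDerivAt_binEntropyDeriv (k : ℕ) {x : ℝ} (hx₀ : x ≠ 0) (hx₁ : x ≠ 1) :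
    HasDerivAt (binEntropyDeriv k) (binEntropyDeriv (k + 1) x) x := by
  have h1x : 1 - x ≠ 0 := sub_ne_zero.mpr hx₁.symm
  have hone_sub : HasDerivAt (fun y : ℝ => 1 - y) (-1) x := by
    simpa using (hasDerivAt_id x).const_sub 1
  match k with
  | 0 => exact hasDerivAt_binEntropy hx₀ hx₁
  | 1 =>
    refine (((hasDerivAt_log h1x).comp x hone_sub).sub (hasDerivAt_log hx₀)).congr_deriv ?_
    simp only [binEntropyDeriv, Nat.factorial_zero, Nat.cast_zero, zero_add, zpow_neg_one]
    ring
  | j + 2 =>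
    have hx := hasDerivAt_zpow (-(j + 1 : ℤ)) x (Or.inl hx₀)
    have h1 := (hasDerivAt_zpow (-(j + 1 : ℤ)) (1 - x) (Or.inl h1x)).comp x hone_sub
    refine ((((hx.const_mul ((-1) ^ j)).add h1).const_mul (j ! : ℝ)).neg).congr_deriv ?_
    simp only [binEntropyDeriv, Nat.factorial_succ]
    push_cast
    ring_nf

theorem iteratedDeriv_eqOn_of_hasDerivAt {D : ℕ → ℝ → ℝ} {s : Set ℝ} (hs : IsOpen s)
    (hD : ∀ k, ∀ x ∈ s, HasDerivAt (D k) (D (k + 1) x) x) (k : ℕ) :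
    Set.EqOn (iteratedDeriv k (D 0)) (D k) s := by
  induction k with
  | zero => intro x _; rfl
  | succ k ih =>
    intro x hx
    rw [iteratedDeriv_succ]
    exact ((hD k x hx).congr_of_eventuallyEq (Filter.eventuallyEq_of_mem (hs.mem_nhds hx) ih)).deriv

theorem le_sum_iteratedDeriv_of_odd {f : ℝ → ℝ} {s : Set ℝ} {n : ℕ} (hs : IsOpen s)
    (hs' : s.OrdConnected) (hf : ContDiffOn ℝ (n + 1) f s) (hn : Odd n)
    (hf' : ∀ y ∈ s, iteratedDeriv (n + 1) f y ≤ 0) {x₀ x : ℝ} (hx₀ : x₀ ∈ s) (hx : x ∈ s) :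
    f x ≤ ∑ k ∈ Finset.range (n + 1), iteratedDeriv k f x₀ / k ! * (x - x₀) ^ k := by
  rcases eq_or_ne x₀ x with rfl | hne
  · simp [Finset.sum_range_succ']
  have hsub : Set.uIcc x₀ x ⊆ s := hs'.uIcc_subset hx₀ hx
  obtain ⟨y, hy, hrem⟩ := taylor_mean_remainder_lagrange_iteratedDeriv hne (hf.mono hsub)
  have hrem_nonpos : iteratedDeriv (n + 1) f y * (x - x₀) ^ (n + 1) / (n + 1)! ≤ 0 :=
    div_nonpos_of_nonpos_of_nonneg
      (mul_nonpos_of_nonpos_of_nonneg (hf' y (hsub (Set.Ioo_subset_Icc_self hy)))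
        (hn.add_one.pow_nonneg _)) (by positivity)
  have htaylor : taylorWithinEval f n (Set.uIcc x₀ x) x₀ x =
      ∑ k ∈ Finset.range (n + 1), iteratedDeriv k f x₀ / k ! * (x - x₀) ^ k := by
    rw [taylor_within_apply]
    refine Finset.sum_congr rfl fun k hk => ?_
    have hfk : ContDiffAt ℝ k f x₀ :=
      (hf.contDiffAt (hs.mem_nhds hx₀)).of_le (by exact_mod_cast (Finset.mem_range.mp hk).le)
    rw [iteratedDerivWithin_eq_iteratedDeriv (uniqueDiffOn_uIcc hne) hfk Set.left_mem_uIcc,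
      smul_eq_mul]
    ring
  linarith

theorem contDiffAt_binEntropy {x : ℝ} (hx₀ : x ≠ 0) (hx₁ : x ≠ 1) (n : WithTop ℕ∞) :
    ContDiffAt ℝ n binEntropy x := by
  have : 1 - x ≠ 0 := sub_ne_zero.mpr hx₁.symm
  unfold binEntropy
  fun_prop (disch := simp [*])

theorem iteratedDeriv_binEntropy (k : ℕ) :
    Set.EqOn (iteratedDeriv k binEntropy) (binEntropyDeriv k) (Set.Ioo 0 1) :=
  iteratedDeriv_eqOn_of_hasDerivAt isOpen_Ioo
    (fun k _ hx => hasDerivAt_binEntropyDeriv k hx.1.ne' hx.2.ne) k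

theorem binEntropyDeriv_two_mul_add_two_nonpos (l : ℕ) {x : ℝ} (hx : x ∈ Set.Ioo (0 : ℝ) 1) :
    binEntropyDeriv (2 * l + 2) x ≤ 0 := by
  have := hx.1
  have := sub_pos.mpr hx.2
  simp only [binEntropyDeriv, (even_two_mul l).neg_one_pow, one_mul, neg_nonpos]
  positivity

theorem Fcoef_eq_neg_binEntropyDeriv_div {k : ℕ} (hk : 1 ≤ k) {p : ℝ}
    (hp : p ∈ Set.Ioo (0 : ℝ) 1) : Fcoef k p = -(binEntropyDeriv k p / k !) := by
  obtain ⟨j, rfl | rfl⟩ : ∃ j, k = 1 ∨ k = j + 2 := by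
    rcases k with _ | _ | j <;> simp_all
  · simp [Fcoef, binEntropyDeriv, log_div hp.1.ne' (sub_pos.mpr hp.2).ne']
  · have hfact : ((j + 2)! : ℝ) = (j + 2) * (j + 1) * j ! := by
      push_cast [Nat.factorial_succ]; ring
    simp only [Fcoef, binEntropyDeriv, hfact]
    push_cast
    rw [show ((j : ℤ) + 2 - 1) = j + 1 by ring, show ((j : ℝ) + 2 - 1) = j + 1 by ring, pow_add,
      neg_one_sq, mul_one, neg_div, neg_neg, mul_comm (j ! : ℝ),
      mul_div_mul_right _ _ (by positivity)]
    ring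

theorem sum_Fcoef_mul_pow_le {p : ℝ} (hp : p ∈ Set.Ioo (0 : ℝ) 1) (l : ℕ) {x : ℝ}
    (hx : x ∈ Set.Icc (0 : ℝ) 1) :
    ∑ k ∈ Finset.Icc 1 (2 * l + 1), Fcoef k p * (x - p) ^ k ≤ binEntropy p - binEntropy x := by
  have hIoo : ∀ x ∈ Set.Ioo (0 : ℝ) 1,
      ∑ k ∈ Finset.Icc 1 (2 * l + 1), Fcoef k p * (x - p) ^ k ≤ binEntropy p - binEntropy x := by
    intro x hx
    have htaylor := le_sum_iteratedDeriv_of_odd isOpen_Ioo Set.ordConnected_Ioo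
      (fun y hy => (contDiffAt_binEntropy hy.1.ne' hy.2.ne _).contDiffWithinAt)
      (odd_two_mul_add_one l)
      (fun y hy => (iteratedDeriv_binEntropy _ hy).trans_le
        (binEntropyDeriv_two_mul_add_two_nonpos l hy)) hp hx
    rw [Finset.range_eq_Ico, Finset.sum_eq_sum_Ico_succ_bot (Nat.succ_pos _), zero_add,
      Nat.succ_eq_add_one, Finset.Ico_add_one_right_eq_Icc] at htaylor
    have hcoef : ∀ k ∈ Finset.Icc 1 (2 * l + 1),
        iteratedDeriv k binEntropy p / k ! * (x - p) ^ k = -(Fcoef k p * (x - p) ^ k) := by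
      intro k hk
      rw [iteratedDeriv_binEntropy k hp,
        Fcoef_eq_neg_binEntropyDeriv_div (Finset.mem_Icc.mp hk).1 hp]
      ring
    rw [Finset.sum_congr rfl hcoef, Finset.sum_neg_distrib] at htaylor
    simp only [iteratedDeriv_zero, Nat.factorial_zero, Nat.cast_one, div_one, pow_zero,
      mul_one] at htaylor
    linarith
  have hclosed : IsClosed {x | ∑ k ∈ Finset.Icc 1 (2 * l + 1), Fcoef k p * (x - p) ^ k ≤
      binEntropy p - binEntropy x} :=
    isClosed_le (by fun_prop) (by fun_prop)
  exact closure_minimal hIoo hclosed (by rwa [closure_Ioo zero_ne_one])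

theorem binomEnt_diff_ge_taylor_general (p : ℝ) (hp : p ∈ Set.Ioo (0:ℝ) 1) (n : ℕ)
    (l : ℕ) :
    binomEnt (n + 1) p - binomEnt n p ≥
      ∑ k ∈ Finset.Icc 1 (2 * l + 1),
        Fcoef k p * centralMoment k (n + 1) p / ((n : ℝ) + 1) ^ k := by
  have hx : ∀ i ∈ Finset.range (n + 2), (i : ℝ) / (n + 1) ∈ Set.Icc (0 : ℝ) 1 := fun i hi =>
    ⟨by positivity, div_le_one_of_le₀
      (by exact_mod_cast Nat.lt_succ_iff.mp (Finset.mem_range.mp hi)) (by positivity)⟩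
  calc ∑ k ∈ Finset.Icc 1 (2 * l + 1), Fcoef k p * centralMoment k (n + 1) p / ((n : ℝ) + 1) ^ k
      = ∑ i ∈ Finset.range (n + 2), binomPmf (n + 1) p i *
          ∑ k ∈ Finset.Icc 1 (2 * l + 1), Fcoef k p * ((i : ℝ) / (n + 1) - p) ^ k := by
        simp_rw [mul_div_assoc, ← sum_binomPmf_mul_div_sub_pow, Finset.mul_sum]
        rw [Finset.sum_comm]
        refine Finset.sum_congr rfl fun i _ => Finset.sum_congr rfl fun k _ => ?_
        ring
    _ ≤ ∑ i ∈ Finset.range (n + 2),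
          binomPmf (n + 1) p i * (binEntropy p - binEntropy (i / (n + 1))) :=
        Finset.sum_le_sum fun i hi => mul_le_mul_of_nonneg_left
          (sum_Fcoef_mul_pow_le hp l (hx i hi)) (binomPmf_nonneg (Set.Ioo_subset_Icc_self hp) _ _)
    _ = binomEnt (n + 1) p - binomEnt n p := by
        rw [binomEnt_succ_sub]
        simp only [mul_sub, Finset.sum_sub_distrib, ← Finset.sum_mul, sum_binomPmf, one_mul]

theorem binomEnt_diff_ge_taylor (p : ℝ) (hp : p ∈ Set.Ioo (0:ℝ) 1) (n : ℕ) (hn : 1 ≤ n)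
    (l : ℕ) :
    binomEnt (n + 1) p - binomEnt n p ≥
      ∑ k ∈ Finset.Icc 1 (2 * l + 1),
        Fcoef k p * centralMoment k (n + 1) p / ((n : ℝ) + 1) ^ k :=
  binomEnt_diff_ge_taylor_general p hp n l
end
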